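/- arXiv:1507.00517 — 6 statements merged into one kernel-verified Lean document; each statement's English description precedes it below -/
import Mathlib

section
/- Let G be a connected graph of order n with nontrivial automorphism group. Then fxd(G) = n − 1 if and only if there exist distinct vertices u, v with N(v) \ {u} = N(u) \ {v}. -/
open SimpleGraph

variable {V : Type*}

/-- A set `F` of vertices is a fixing set: the only automorphism fixing
every vertex of `F` pointwise is the identity. -/
def IsFixingSet (G : SimpleGraph V) (F : Set V) : Prop :=
  ∀ g : G ≃g G, (∀ v ∈ F, g v = v) → ∀ v, g v = v

/-- The fixing number: minimum cardinality of a fixing set. -/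
noncomputable def fixNum [Fintype V] (G : SimpleGraph V) : ℕ :=
  sInf {k | ∃ F : Finset V, F.card = k ∧ IsFixingSet G ↑F}

/-- The fixed number: minimum `k` such that every `k`-subset is a fixing set. -/
noncomputable def fxdNum [Fintype V] (G : SimpleGraph V) : ℕ :=
  sInf {k | ∀ F : Finset V, F.card = k → IsFixingSet G ↑F}

lemma fixing_mono {G : SimpleGraph V} {F F' : Set V} (h : F ⊆ F')
    (hF : IsFixingSet G F) : IsFixingSet G F' :=
  fun g hg => hF g (fun v hv => hg v (h hv))

lemma card_sub_one_fixing [Fintype V] {G : SimpleGraph V} (F : Finset V)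
    (hF : F.card = Fintype.card V - 1) : IsFixingSet G ↑F := by
  classical
  intro g hg w
  by_contra hw
  have hwF : w ∉ F := fun h => hw (hg w h)
  have hgwF : g w ∉ F := by
    intro h
    exact hw (g.injective (hg _ h))
  have hsub : ({w, g w} : Finset V) ⊆ Fᶜ := by
    intro x hx
    simp only [Finset.mem_insert, Finset.mem_singleton] at hx
    rcases hx with rfl | rfl <;> simp [hwF, hgwF]
  have h2 : ({w, g w} : Finset V).card = 2 :=
    Finset.card_pair (fun h => hw h.symm)
  have hle := Finset.card_le_card hsub
  rw [h2, Finset.card_compl, hF] at hle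
  have hpos : 0 < Fintype.card V := Fintype.card_pos_iff.mpr ⟨w⟩
  omega

lemma swap_adj {G : SimpleGraph V} [DecidableEq V] {u v : V}
    (h : ∀ w, w ≠ u → w ≠ v → (G.Adj u w ↔ G.Adj v w)) :
    ∀ a b, G.Adj a b → G.Adj (Equiv.swap u v a) (Equiv.swap u v b) := by
  intro a b hab
  rcases eq_or_ne a u with rfl | hau
  · rw [Equiv.swap_apply_left]
    rcases eq_or_ne b a with rfl | hbu
    · exact (G.loopless.irrefl _ hab).elim
    rcases eq_or_ne b v with rfl | hbv
    · rw [Equiv.swap_apply_right]; exact hab.symm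
    · rw [Equiv.swap_apply_of_ne_of_ne hbu hbv]; exact (h b hbu hbv).mp hab
  rcases eq_or_ne a v with rfl | hav
  · rw [Equiv.swap_apply_right]
    rcases eq_or_ne b u with rfl | hbu
    · rw [Equiv.swap_apply_left]; exact hab.symm
    rcases eq_or_ne b a with rfl | hbv
    · exact (G.loopless.irrefl _ hab).elim
    · rw [Equiv.swap_apply_of_ne_of_ne hbu hbv]; exact (h b hbu hbv).mpr hab
  · rw [Equiv.swap_apply_of_ne_of_ne hau hav]
    rcases eq_or_ne b u with rfl | hbu
    · rw [Equiv.swap_apply_left]; exact ((h a hau hav).mp hab.symm).symm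
    rcases eq_or_ne b v with rfl | hbv
    · rw [Equiv.swap_apply_right]; exact ((h a hau hav).mpr hab.symm).symm
    · rw [Equiv.swap_apply_of_ne_of_ne hbu hbv]; exact hab

/-- The swap of two "twin" vertices is a graph automorphism. -/
noncomputable def swapIso {G : SimpleGraph V} [DecidableEq V] {u v : V}
    (h : ∀ w, w ≠ u → w ≠ v → (G.Adj u w ↔ G.Adj v w)) : G ≃g G where
  toEquiv := Equiv.swap u v
  map_rel_iff' := by
    intro a b
    constructor
    · intro hab
      have := swap_adj h _ _ hab
      simpa using this
    · exact swap_adj h a b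

theorem stmt3 [Fintype V] (G : SimpleGraph V) (hconn : G.Connected)
    (hnt : ∃ g : G ≃g G, ∃ v, g v ≠ v) :
    fxdNum G = Fintype.card V - 1 ↔
      ∃ u v : V, u ≠ v ∧ G.neighborSet v \ {u} = G.neighborSet u \ {v} := by
  classical
  set n := Fintype.card V with hn
  set S : Set ℕ := {k | ∀ F : Finset V, F.card = k → IsFixingSet G ↑F} with hS
  have hfx : fxdNum G = sInf S := rfl
  obtain ⟨g₀, v₀, hv₀⟩ := hnt
  have hn2 : 2 ≤ n := by
    rw [hn]
    exact Fintype.one_lt_card_iff.mpr ⟨g₀ v₀, v₀, hv₀⟩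
  have hmemn1 : n - 1 ∈ S := fun F hF => card_sub_one_fixing F hF
  have upward : ∀ k m, k ∈ S → k ≤ m → m ∈ S := by
    intro k m hk hkm F hF
    obtain ⟨F', hsub, hcard⟩ := Finset.exists_subset_card_eq (show k ≤ F.card by omega)
    exact fixing_mono (Finset.coe_subset.mpr hsub) (hk F' hcard)
  have key : (n - 2) ∉ S ↔
      ∃ u v : V, u ≠ v ∧ G.neighborSet v \ {u} = G.neighborSet u \ {v} := by
    constructor
    · intro hns
      simp only [hS, Set.mem_setOf_eq, not_forall] at hns
      obtain ⟨F, hcard, hnf⟩ := hns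
      simp only [IsFixingSet, not_forall] at hnf
      obtain ⟨g, hg, w, hw⟩ := hnf
      have hcc : Fᶜ.card = 2 := by
        rw [Finset.card_compl, hcard]; omega
      obtain ⟨u, v, huv, hFc⟩ := Finset.card_eq_two.mp hcc
      have hgfix : ∀ x, x ∈ F → g x = x := fun x hx => hg x (Finset.mem_coe.mpr hx)
      have hmove : ∀ x, g x ≠ x → x ∈ Fᶜ := by
        intro x hx
        rw [Finset.mem_compl]
        exact fun h => hx (hgfix x h)
      have hstable : ∀ x, g x ≠ x → g x ∈ Fᶜ := by
        intro x hx
        rw [Finset.mem_compl]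
        intro h
        exact hx (g.injective (hgfix _ h))
      -- the moved vertex is u or v; by symmetry handle both
      have core : ∀ a b : V, a ≠ b → Fᶜ = {a, b} → g a ≠ a →
          G.neighborSet b \ {a} = G.neighborSet a \ {b} := by
        intro a b hab hFc' hga
        have hga' : g a = b := by
          have := hstable a hga
          rw [hFc'] at this
          simp only [Finset.mem_insert, Finset.mem_singleton] at this
          tauto
        have hgb : g b ≠ b := by
          intro hbe
          exact hab (g.injective (hga'.trans hbe.symm))
        have hgb' : g b = a := by
          have := hstable b hgb
          rw [hFc'] at this
          simp only [Finset.mem_insert, Finset.mem_singleton] at this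
          rcases this with h | h
          · exact h
          · exact (hgb h).elim
        ext x
        simp only [Set.mem_diff, mem_neighborSet, Set.mem_singleton_iff]
        rcases eq_or_ne x a with rfl | hxa
        · simp [G.loopless]
        rcases eq_or_ne x b with rfl | hxb
        · simp [G.loopless]
        have hxF : x ∈ F := by
          by_contra hxF
          have : x ∈ Fᶜ := Finset.mem_compl.mpr hxF
          rw [hFc'] at this
          simp only [Finset.mem_insert, Finset.mem_singleton] at this
          tauto
        have hgx : g x = x := hgfix x hxF
        have : G.Adj b x ↔ G.Adj a x := by
          rw [← g.map_rel_iff, hgb', hgx]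
        simp [this, hxa, hxb]
      have hwFc := hmove w hw
      rw [hFc] at hwFc
      simp only [Finset.mem_insert, Finset.mem_singleton] at hwFc
      rcases hwFc with rfl | rfl
      · exact ⟨w, v, huv, core w v huv hFc hw⟩
      · exact ⟨w, u, huv.symm, core w u huv.symm (by rw [hFc, Finset.pair_comm]) hw⟩
    · rintro ⟨u, v, huv, hcond⟩ hmem
      have h : ∀ w, w ≠ u → w ≠ v → (G.Adj u w ↔ G.Adj v w) := by
        intro w hwu hwv
        have := Set.ext_iff.mp hcond w
        simp only [Set.mem_diff, mem_neighborSet, Set.mem_singleton_iff,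
          hwu, hwv, and_true, not_false_eq_true] at this
        exact this.symm
      set F : Finset V := {u, v}ᶜ with hF
      have hcard : F.card = n - 2 := by
        rw [hF, Finset.card_compl, Finset.card_pair huv]
      have hfix := hmem F hcard
      have := hfix (swapIso h) ?_ u
      · simp only [swapIso, RelIso.coe_fn_mk, Equiv.swap_apply_left] at this
        exact huv (this.symm)
      · intro x hx
        rw [Finset.mem_coe, hF, Finset.mem_compl] at hx
        simp only [Finset.mem_insert, Finset.mem_singleton, not_or] at hx
        simp only [swapIso, RelIso.coe_fn_mk]
        exact Equiv.swap_apply_of_ne_of_ne hx.1 hx.2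
  rw [hfx]
  constructor
  · intro heq
    apply key.mp
    intro hSm
    have := Nat.sInf_le hSm
    omega
  · intro hex
    have hnot := key.mpr hex
    refine le_antisymm (Nat.sInf_le hmemn1) ?_
    refine le_csInf ⟨_, hmemn1⟩ ?_
    intro k hk
    by_contra hlt
    push_neg at hlt
    exact hnot (upward k (n - 2) hk (by omega))
end

section
/- Let G be a connected graph of order n. Then fix(G) = n − 1 if and only if G is the complete graph K_n. -/
open SimpleGraph

variable {V : Type*}

lemma erase_isFixingSet [Fintype V] [DecidableEq V] (G : SimpleGraph V) (v0 : V) :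
    IsFixingSet G ↑(Finset.univ.erase v0) := by
  intro g hg v
  by_cases hv : v = v0
  · subst hv
    by_contra h
    have h1 : g v ∈ (Finset.univ.erase v : Finset V) := by
      simp [Finset.mem_erase]; exact h
    have h2 : g (g v) = g v := hg _ (by exact_mod_cast h1)
    exact h (g.injective h2)
  · exact hg v (by simp [Finset.mem_erase, hv])

theorem stmt4 [Fintype V] (G : SimpleGraph V) (hconn : G.Connected) :
    fixNum G = Fintype.card V - 1 ↔ G = (⊤ : SimpleGraph V) := by
  classical
  set n := Fintype.card V with hn
  constructor
  · -- forward: contrapositive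
    intro hfix
    by_contra hne
    -- a nonadjacent distinct pair exists
    obtain ⟨a, b, hab, hnadj⟩ : ∃ a b, a ≠ b ∧ ¬ G.Adj a b := by
      by_contra h
      push_neg at h
      apply hne
      ext x y
      simp only [top_adj]
      exact ⟨fun h' => h'.ne, fun hxy => h x y hxy⟩
    -- a has a neighbor
    obtain ⟨c, hac⟩ : ∃ c, G.Adj a c := by
      obtain ⟨p⟩ := hconn.preconnected a b
      cases p with
      | nil => exact absurd rfl hab
      | cons h q => exact ⟨_, h⟩
    -- produce a distinguishing pair u ≠ v with witness w ∉ {u,v}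
    obtain ⟨u, v, w, huv, hwu, hwv, hdiff⟩ :
        ∃ u v w : V, u ≠ v ∧ w ≠ u ∧ w ≠ v ∧ ¬ (G.Adj u w ↔ G.Adj v w) := by
      have hac' : a ≠ c := G.ne_of_adj hac
      by_cases hbc : G.Adj b c
      · -- pair (a, c), witness b
        have hb_ne_c : b ≠ c := G.ne_of_adj hbc
        refine ⟨a, c, b, hac', hab.symm, hb_ne_c, ?_⟩
        have h1 : ¬ G.Adj a b := hnadj
        have h2 : G.Adj c b := hbc.symm
        tauto
      · -- pair (a, b), witness c
        have hcb : c ≠ b := by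
          intro h; subst h; exact hnadj hac
        refine ⟨a, b, c, hab, hac'.symm, hcb, ?_⟩
        tauto
    -- F = univ \ {u, v} is a fixing set
    set F : Finset V := (Finset.univ.erase u).erase v with hF
    have hmemF : ∀ x : V, x ≠ u → x ≠ v → x ∈ F := by
      intro x hxu hxv; simp [hF, Finset.mem_erase, hxu, hxv]
    have hfixF : IsFixingSet G ↑F := by
      intro g hg
      have hfixed : ∀ x : V, x ≠ u → x ≠ v → g x = x := by
        intro x hxu hxv; exact hg x (by exact_mod_cast hmemF x hxu hxv)
      have hgu : g u = u ∨ g u = v := by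
        by_contra h
        push_neg at h
        have := hfixed (g u) h.1 h.2
        exact h.1 (g.injective this)
      have hgu' : g u = u := by
        rcases hgu with h | h
        · exact h
        · -- g u = v forces g v = u, contradicting the distinguishing witness
          exfalso
          have hgv : g v = u := by
            have hgvne : g v ≠ v := by
              intro h'; exact huv (g.injective (h.trans h'.symm))
            by_contra h'
            have := hfixed (g v) h' hgvne
            exact hgvne (g.injective this)
          have hw : g w = w := hfixed w hwu hwv
          apply hdiff
          constructor
          · intro hadj
            have : G.Adj (g u) (g w) := g.map_adj_iff.mpr hadj
            rw [h, hw] at this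
            exact this
          · intro hadj
            have : G.Adj (g v) (g w) := g.map_adj_iff.mpr hadj
            rw [hgv, hw] at this
            exact this
      intro x
      by_cases hxu : x = u
      · subst hxu; exact hgu'
      by_cases hxv : x = v
      · subst hxv
        have hgvne : g x ≠ u := by
          intro h'; exact huv (g.injective (hgu'.symm ▸ h' : g x = g u)).symm
        by_contra h'
        have := hfixed (g x) hgvne h'
        exact h' (g.injective this)
      · exact hfixed x hxu hxv
    have hcardF : F.card = n - 2 := by
      have hvmem : v ∈ Finset.univ.erase u := by
        simp [Finset.mem_erase, huv.symm]
      rw [hF, Finset.card_erase_of_mem hvmem,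
        Finset.card_erase_of_mem (Finset.mem_univ u), Finset.card_univ]
      omega
    have hle : fixNum G ≤ n - 2 := Nat.sInf_le ⟨F, hcardF, hfixF⟩
    have h2 : 2 ≤ n := by
      rw [hn]
      have : Nontrivial V := ⟨u, v, huv⟩
      exact Fintype.one_lt_card
    rw [hfix] at hle
    omega
  · -- backward: G = ⊤
    intro hG
    subst hG
    rcases isEmpty_or_nonempty V with hemp | hne
    · have h0 : (0 : ℕ) ∈ {k | ∃ F : Finset V, F.card = k ∧ IsFixingSet (⊤ : SimpleGraph V) ↑F} := by
        exact ⟨∅, rfl, fun g hg v => isEmptyElim v⟩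
      have : fixNum (⊤ : SimpleGraph V) = 0 := Nat.le_zero.mp (Nat.sInf_le h0)
      rw [this, hn, Fintype.card_eq_zero]
    · obtain ⟨v0⟩ := hne
      have hmem : (n - 1) ∈
          {k | ∃ F : Finset V, F.card = k ∧ IsFixingSet (⊤ : SimpleGraph V) ↑F} := by
        refine ⟨Finset.univ.erase v0, ?_, erase_isFixingSet _ v0⟩
        rw [Finset.card_erase_of_mem (Finset.mem_univ v0), Finset.card_univ]
      have hlow : ∀ k ∈ {k | ∃ F : Finset V, F.card = k ∧
          IsFixingSet (⊤ : SimpleGraph V) ↑F}, n - 1 ≤ k := by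
        rintro k ⟨F, hFcard, hFfix⟩
        by_contra h
        push_neg at h
        have hcardle : F.card ≤ n := by rw [hn]; exact Finset.card_le_univ F
        have h2 : 2 ≤ Fᶜ.card := by
          rw [Finset.card_compl]
          omega
        obtain ⟨u, hu, v, hv, huv⟩ := Finset.one_lt_card.mp h2
        have hu' : u ∉ F := Finset.mem_compl.mp hu
        have hv' : v ∉ F := Finset.mem_compl.mp hv
        let g : (⊤ : SimpleGraph V) ≃g (⊤ : SimpleGraph V) :=
          ⟨Equiv.swap u v, by
            intro a b
            simp only [top_adj]
            exact (Equiv.swap u v).injective.ne_iff⟩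
        have hfixes : ∀ x ∈ (↑F : Set V), g x = x := by
          intro x hx
          have hx' : x ∈ F := hx
          exact Equiv.swap_apply_of_ne_of_ne
            (fun h' => hu' (h' ▸ hx')) (fun h' => hv' (h' ▸ hx'))
        have := hFfix g hfixes u
        have : v = u := by
          have h' : g u = v := Equiv.swap_apply_left u v
          rw [this] at h'
          exact h'.symm
        exact huv this.symm
      exact le_antisymm (Nat.sInf_le hmem) (le_csInf ⟨n - 1, hmem⟩ hlow)
end

section
/- Let G be a connected graph of order n with G ≠ K_n. If fix(G) = fxd(G) = n − 1, then for every pair of distinct vertices u, v ∈ V(G), N(u) \ {v} ≠ N(v) \ {u}. -/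
open SimpleGraph

variable {V : Type*}

/-- If an automorphism swaps `a` and `b` and fixes everything else, then `a,b` are twins. -/
lemma swap_twins (G : SimpleGraph V) (a b : V) (hab : a ≠ b) (g : G ≃g G)
    (hg : ∀ v, v ≠ a → v ≠ b → g v = v) (hga : g a = b) :
    G.neighborSet a \ {b} = G.neighborSet b \ {a} := by
  have hgb : g b = a := by
    by_contra hgb
    by_cases h : g b = b
    · exact hab (g.injective (hga.trans h.symm))
    · have := hg (g b) hgb h
      exact h (g.injective this)
  ext w
  simp only [Set.mem_diff, mem_neighborSet, Set.mem_singleton_iff]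
  by_cases hwa : w = a
  · subst hwa
    simp [G.irrefl]
  by_cases hwb : w = b
  · subst hwb
    simp [G.irrefl]
  · have hw : g w = w := hg w hwa hwb
    constructor
    · rintro ⟨h, -⟩
      refine ⟨?_, hwa⟩
      have := g.map_adj_iff.mpr h
      rwa [hga, hw] at this
    · rintro ⟨h, -⟩
      refine ⟨?_, hwb⟩
      have := g.map_adj_iff.mpr h
      rwa [hgb, hw] at this

theorem stmt5 [Fintype V] (G : SimpleGraph V) (hconn : G.Connected)
    (hne : G ≠ (⊤ : SimpleGraph V))
    (hfix : fixNum G = Fintype.card V - 1) (hfxd : fxdNum G = Fintype.card V - 1) :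
    ∀ u v : V, u ≠ v → G.neighborSet u \ {v} ≠ G.neighborSet v \ {u} := by
  intro u v huv htw0
  classical
  -- two vertices exist, so card ≥ 2
  have hcard : 2 ≤ Fintype.card V := Fintype.one_lt_card_iff_nontrivial.mpr ⟨⟨u, v, huv⟩⟩
  by_cases htw : ∀ a b : V, a ≠ b → G.neighborSet a \ {b} = G.neighborSet b \ {a}
  · -- all pairs are twins: G is complete, contradiction
    apply hne
    ext x y
    simp only [top_adj]
    constructor
    · exact fun h => G.ne_of_adj h
    · intro hxy
      -- x has a neighbor c
      obtain ⟨w⟩ := hconn.preconnected x y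
      cases w with
      | nil => exact absurd rfl hxy
      | @cons _ c _ h p =>
        by_cases hcy : c = y
        · exact hcy ▸ h
        · have hxc : G.Adj x c := h
          have := htw c y hcy
          have hx : x ∈ G.neighborSet c \ {y} := by
            constructor
            · exact G.adj_symm hxc
            · simp only [Set.mem_singleton_iff]
              exact hxy
          rw [this] at hx
          exact G.adj_symm hx.1
  · -- some pair is not twins: fixing set of size n - 2
    push_neg at htw
    obtain ⟨a, b, hab, hnetw⟩ := htw
    exfalso
    set F : Finset V := Finset.univ \ {a, b} with hF
    have hFcard : F.card = Fintype.card V - 2 := by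
      rw [hF, Finset.card_sdiff_of_subset (Finset.subset_univ _), Finset.card_univ]
      congr 1
      rw [Finset.card_insert_of_notMem (by simpa using hab), Finset.card_singleton]
    have hFfix : IsFixingSet G ↑F := by
      intro g hg w
      have hg' : ∀ v : V, v ≠ a → v ≠ b → g v = v := by
        intro v hva hvb
        apply hg
        simp [hF, hva, hvb]
      -- g a ∈ {a, b}
      have hga : g a = a ∨ g a = b := by
        by_contra h
        push_neg at h
        have := hg' (g a) h.1 h.2
        exact h.1 (g.injective this)
      cases hga with
      | inl hga =>
        have hgb : g b = b := by
          by_contra h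
          by_cases h2 : g b = a
          · exact hab (g.injective (hga.symm ▸ h2 : g b = g a)).symm
          · exact h (g.injective (hg' (g b) h2 h))
        by_cases hwa : w = a
        · exact hwa ▸ hga
        by_cases hwb : w = b
        · exact hwb ▸ hgb
        · exact hg' w hwa hwb
      | inr hga =>
        exact absurd (swap_twins G a b hab g hg' hga) hnetw
    have hle : fixNum G ≤ Fintype.card V - 2 :=
      Nat.sInf_le ⟨F, hFcard, hFfix⟩
    rw [hfix] at hle
    omega
end

section
/- Let T be a tree and F ⊆ V(T). Then F is a fixing set of T if and only if every automorphism of T fixing all vertices of F also fixes every leaf (end vertex) of T. -/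
open SimpleGraph

variable {V : Type*}

section Aux

variable {G : SimpleGraph V}

private lemma aux_dist_lt_of_mem_support {u w z : V} (p : G.Walk u w)
    (hp : p.length = G.dist u w) (hz : z ∈ p.support) (hzw : z ≠ w) :
    G.dist u z < G.dist u w := by
  classical
  have hsplit := p.take_spec hz
  have hlen : (p.takeUntil z hz).length + (p.dropUntil z hz).length = p.length := by
    rw [← Walk.length_append, hsplit]
  have h1 : 1 ≤ (p.dropUntil z hz).length := by
    rcases Nat.eq_zero_or_pos (p.dropUntil z hz).length with h | h
    · exact absurd (Walk.eq_of_length_eq_zero h) hzw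
    · exact h
  have h2 := SimpleGraph.dist_le (p.takeUntil z hz)
  omega

private lemma aux_tree_adj_dist_ne (hT : G.IsTree) {u z w : V} (h : G.Adj z w) :
    G.dist u z ≠ G.dist u w := by
  intro heq
  have hb : G.IsBridge s(z, w) := (isAcyclic_iff_forall_adj_isBridge.mp hT.2) h
  have hall := isBridge_iff_adj_and_forall_walk_mem_edges.mp hb
  obtain ⟨q, hq⟩ := hT.1.exists_walk_length_eq_dist u z
  obtain ⟨p, hp⟩ := hT.1.exists_walk_length_eq_dist u w
  have hmem := hall (q.reverse.append p)
  rw [Walk.edges_append, List.mem_append, Walk.edges_reverse, List.mem_reverse] at hmem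
  rcases hmem with hmem | hmem
  · have hws : w ∈ q.support := q.snd_mem_support_of_mem_edges hmem
    have := aux_dist_lt_of_mem_support q hq hws h.ne'
    omega
  · have hzs : z ∈ p.support := p.fst_mem_support_of_mem_edges hmem
    have := aux_dist_lt_of_mem_support p hp hzs h.ne
    omega

private lemma aux_closer_unique (hT : G.IsTree) {u w x₁ x₂ : V}
    (h₁ : G.Adj x₁ w) (h₂ : G.Adj x₂ w)
    (hd₁ : G.dist u x₁ + 1 = G.dist u w) (hd₂ : G.dist u x₂ + 1 = G.dist u w) :
    x₁ = x₂ := by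
  obtain ⟨r₁, hr₁⟩ := hT.1.exists_walk_length_eq_dist u x₁
  obtain ⟨r₂, hr₂⟩ := hT.1.exists_walk_length_eq_dist u x₂
  have hc₁ : (r₁.concat h₁).length = G.dist u w := by
    rw [Walk.length_concat, hr₁, hd₁]
  have hc₂ : (r₂.concat h₂).length = G.dist u w := by
    rw [Walk.length_concat, hr₂, hd₂]
  have hp₁ := (r₁.concat h₁).isPath_of_length_eq_dist hc₁
  have hp₂ := (r₂.concat h₂).isPath_of_length_eq_dist hc₂
  have heq := hT.2.path_unique ⟨r₁.concat h₁, hp₁⟩ ⟨r₂.concat h₂, hp₂⟩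
  have heq' : r₁.concat h₁ = r₂.concat h₂ := congrArg Subtype.val heq
  have hs : (r₁.concat h₁).reverse.support = (r₂.concat h₂).reverse.support := by rw [heq']
  rw [Walk.reverse_concat, Walk.reverse_concat, Walk.support_cons, Walk.support_cons,
      r₁.reverse.support_eq_cons, r₂.reverse.support_eq_cons] at hs
  simp only [List.cons.injEq] at hs
  exact hs.2.1

private lemma aux_exists_farther_neighbor [Fintype V] (hT : G.IsTree) {u w : V} (huw : u ≠ w)
    (hw : Set.ncard (G.neighborSet w) ≠ 1) :
    ∃ x, G.Adj w x ∧ G.dist u x = G.dist u w + 1 := by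
  classical
  obtain ⟨p, hp⟩ := hT.1.exists_walk_length_eq_dist u w
  have hd0 : 0 < G.dist u w := hT.1.pos_dist_of_ne huw
  have hnn : ¬ p.reverse.Nil := Walk.not_nil_of_ne (Ne.symm huw)
  obtain ⟨y, hady, q, hq⟩ := Walk.not_nil_iff.mp hnn
  have hqlen : q.length + 1 = G.dist u w := by
    have : p.reverse.length = (Walk.cons hady q).length := by rw [hq]
    rw [Walk.length_reverse, hp, Walk.length_cons] at this
    omega
  have hdy_le : G.dist u y ≤ G.dist u w - 1 := by
    have := SimpleGraph.dist_le q.reverse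
    rw [Walk.length_reverse] at this
    omega
  have hdy : G.dist u y + 1 = G.dist u w := by
    have htri : G.dist u w ≤ G.dist u y + G.dist y w := hT.1.dist_triangle
    have hyw : G.dist y w ≤ 1 := by
      have := SimpleGraph.dist_le (Walk.cons hady.symm Walk.nil : G.Walk y w)
      simpa using this
    omega
  have hyne : y ∈ G.neighborSet w := hady
  have hfin : (G.neighborSet w).Finite := Set.toFinite _
  have hone : 1 ≤ (G.neighborSet w).ncard := by
    have : (G.neighborSet w).Nonempty := ⟨y, hyne⟩
    exact (Set.ncard_pos hfin).mpr this
  have htwo : 1 < (G.neighborSet w).ncard := by omega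
  obtain ⟨x, hx, hxy⟩ := Set.exists_ne_of_one_lt_ncard htwo y
  refine ⟨x, hx, ?_⟩
  have hne := aux_tree_adj_dist_ne (u := u) hT (hx : G.Adj w x).symm
  have hle : G.dist u x ≤ G.dist u w + 1 := by
    have htri : G.dist u x ≤ G.dist u w + G.dist w x := hT.1.dist_triangle
    have hwx : G.dist w x ≤ 1 := by
      have := SimpleGraph.dist_le (Walk.cons (hx : G.Adj w x) Walk.nil : G.Walk w x)
      exact this
    omega
  have hge : G.dist u w ≤ G.dist u x + 1 := by
    have htri : G.dist u w ≤ G.dist u x + G.dist x w := hT.1.dist_triangle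
    have hwx : G.dist x w ≤ 1 := by
      have := SimpleGraph.dist_le (Walk.cons (hx : G.Adj w x).symm Walk.nil : G.Walk x w)
      simpa using this
    omega
  rcases Nat.lt_or_ge (G.dist u x) (G.dist u w) with hlt | hge'
  · exfalso
    have hxd : G.dist u x + 1 = G.dist u w := by omega
    exact hxy (aux_closer_unique hT (hx : G.Adj w x).symm hady.symm hxd hdy)
  · omega

private lemma aux_exists_leaf_beyond [Fintype V] (hT : G.IsTree) {u v : V} (huv : u ≠ v) :
    ∃ l, Set.ncard (G.neighborSet l) = 1 ∧ G.dist u l = G.dist u v + G.dist v l := by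
  classical
  let s : Finset V := Finset.univ.filter (fun w => G.dist u w = G.dist u v + G.dist v w)
  have hvs : v ∈ s := by simp [s]
  obtain ⟨w, hws, hwmax⟩ := s.exists_max_image (G.dist u) ⟨v, hvs⟩
  have hwS : G.dist u w = G.dist u v + G.dist v w := by
    simpa [s] using hws
  have hduv : 0 < G.dist u v := hT.1.pos_dist_of_ne huv
  have huw : u ≠ w := by
    intro h
    rw [← h, SimpleGraph.dist_self] at hwS
    omega
  by_cases hleaf : Set.ncard (G.neighborSet w) = 1
  · exact ⟨w, hleaf, hwS⟩
  · exfalso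
    obtain ⟨x, hadj, hdx⟩ := aux_exists_farther_neighbor hT huw hleaf
    have hxS : G.dist u x = G.dist u v + G.dist v x := by
      have h1 : G.dist u x ≤ G.dist u v + G.dist v x := hT.1.dist_triangle
      have h2 : G.dist v x ≤ G.dist v w + 1 := by
        have htri : G.dist v x ≤ G.dist v w + G.dist w x := hT.1.dist_triangle
        have hwx : G.dist w x ≤ 1 := by
          have := SimpleGraph.dist_le (Walk.cons hadj Walk.nil : G.Walk w x)
          simpa using this
        omega
      omega
    have hxs : x ∈ s := by simp [s, hxS]
    have := hwmax x hxs
    omega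

private lemma aux_iso_dist_le (g : G ≃g G) (a b : V) :
    G.dist (g a) (g b) ≤ G.dist a b := by
    rcases Nat.eq_zero_or_pos (G.dist a b) with h | h
    · rcases SimpleGraph.dist_eq_zero_iff_eq_or_not_reachable.mp h with rfl | hnr
      · simp [SimpleGraph.dist_self]
      · have : ¬ G.Reachable (g a) (g b) := by
          intro ⟨p⟩
          exact hnr ⟨(p.map (g.symm : G →g G)).copy (g.symm_apply_apply a)
            (g.symm_apply_apply b)⟩
        rw [SimpleGraph.dist_eq_zero_of_not_reachable this, h]
    · obtain ⟨p, hp⟩ := SimpleGraph.exists_walk_of_dist_ne_zero (Nat.pos_iff_ne_zero.mp h)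
      calc G.dist (g a) (g b) ≤ (p.map (g : G →g G)).length := SimpleGraph.dist_le _
        _ = p.length := p.length_map _
        _ = G.dist a b := hp

private lemma aux_iso_dist (g : G ≃g G) (u v : V) :
    G.dist (g u) (g v) = G.dist u v := by
  refine le_antisymm (aux_iso_dist_le g u v) ?_
  have := aux_iso_dist_le g.symm (g u) (g v)
  rwa [g.symm_apply_apply, g.symm_apply_apply] at this

end Aux

theorem stmt11 [Fintype V] (G : SimpleGraph V) (hT : G.IsTree) (F : Set V) :
    IsFixingSet G F ↔
      ∀ g : G ≃g G, (∀ v ∈ F, g v = v) →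
        ∀ l : V, Set.ncard (G.neighborSet l) = 1 → g l = l := by
  constructor
  · intro hfix g hg l _
    exact hfix g hg l
  · intro hleaf g hg v
    by_contra hne
    obtain ⟨l, hl, hdl⟩ := aux_exists_leaf_beyond hT (u := g v) (v := v) hne
    have hgl : g l = l := hleaf g hg l hl
    have hdist : G.dist (g v) l = G.dist v l := by
      conv_lhs => rw [← hgl]
      exact aux_iso_dist g v l
    have hpos : 0 < G.dist (g v) v := hT.1.pos_dist_of_ne hne
    omega
end

section
/- Let G be a k-fixed graph with |S(G)| = r, where S(G) is the set of vertices whose orbit under Aut(G) has size greater than 1. Then k ≤ 3 or k ≥ r − 1. -/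
open SimpleGraph

variable {V : Type*}

/-- A permutation is a graph automorphism. -/
private def IsGAut (G : SimpleGraph V) (σ : Equiv.Perm V) : Prop :=
  ∀ u v : V, G.Adj (σ u) (σ v) ↔ G.Adj u v

private def permIso (G : SimpleGraph V) (σ : Equiv.Perm V) (h : IsGAut G σ) : G ≃g G :=
  ⟨σ, h _ _⟩

private lemma permIso_apply (G : SimpleGraph V) (σ : Equiv.Perm V) (h : IsGAut G σ) (x : V) :
    permIso G σ h x = σ x := rfl

private theorem Equiv.Perm.inv_apply_self {α : Type*} (σ : Equiv.Perm α) (x : α) :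
    σ⁻¹ (σ x) = x := Equiv.symm_apply_apply σ x

private theorem Equiv.Perm.apply_inv_self {α : Type*} (σ : Equiv.Perm α) (x : α) :
    σ (σ⁻¹ x) = x := Equiv.apply_symm_apply σ x

/-- Key transitivity lemma: under the hypotheses that every `k`-set is fixing and
every `(k-1)`-set is not, the pointwise stabilizer of any `(k-2)`-set `C` acts
transitively outside `C`. -/
private lemma aux_trans [Fintype V] [DecidableEq V] (G : SimpleGraph V) (k : ℕ)
    (hk : 4 ≤ k) (hn : k + 2 ≤ Fintype.card V)
    (hA : ∀ F : Finset V, F.card = k → IsFixingSet G ↑F)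
    (hB : ∀ F : Finset V, F.card = k - 1 → ¬ IsFixingSet G ↑F)
    (C : Finset V) (hC : C.card = k - 2) (u v : V) (hu : u ∉ C) (hv : v ∉ C) :
    ∃ g : G ≃g G, (∀ x ∈ C, g x = x) ∧ g u = v := by
  classical
  set T : Finset (Equiv.Perm V) :=
    Finset.univ.filter (fun σ => IsGAut G σ ∧ ∀ x ∈ C, σ x = x) with hTdef
  have hmemT : ∀ σ : Equiv.Perm V, σ ∈ T ↔ (IsGAut G σ ∧ ∀ x ∈ C, σ x = x) := by
    intro σ; simp [hTdef]
  have h1T : (1 : Equiv.Perm V) ∈ T := by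
    rw [hmemT]
    exact ⟨fun a b => by simp, fun x _ => rfl⟩
  have hmulT : ∀ σ ∈ T, ∀ τ ∈ T, σ * τ ∈ T := by
    intro σ hσ τ hτ
    rw [hmemT] at hσ hτ ⊢
    refine ⟨fun a b => ?_, fun x hx => ?_⟩
    · rw [Equiv.Perm.mul_apply, Equiv.Perm.mul_apply, hσ.1, hτ.1]
    · rw [Equiv.Perm.mul_apply, hτ.2 x hx, hσ.2 x hx]
  have hinvT : ∀ σ ∈ T, σ⁻¹ ∈ T := by
    intro σ hσ
    rw [hmemT] at hσ ⊢
    refine ⟨fun a b => ?_, fun x hx => ?_⟩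
    · conv_rhs => rw [← Equiv.Perm.apply_inv_self σ a, ← Equiv.Perm.apply_inv_self σ b]
      rw [hσ.1]
    · have := hσ.2 x hx
      conv_lhs => rw [← this]
      exact Equiv.Perm.inv_apply_self σ x
  -- a permutation in T fixing two points outside C is the identity
  have kill : ∀ σ ∈ T, ∀ a b : V, a ∉ C → b ∉ C → a ≠ b → σ a = a → σ b = b → σ = 1 := by
    intro σ hσ a b ha hb hab hfa hfb
    rw [hmemT] at hσ
    have hbC : b ∉ (C : Set V) := hb
    set F : Finset V := insert a (insert b C) with hFdef
    have hFcard : F.card = k := by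
      rw [hFdef, Finset.card_insert_of_notMem, Finset.card_insert_of_notMem hb, hC]
      · omega
      · simp only [Finset.mem_insert]
        push_neg
        exact ⟨hab, ha⟩
    have hfixF := hA F hFcard (permIso G σ hσ.1)
    have hpt : ∀ x ∈ (F : Set V), permIso G σ hσ.1 x = x := by
      intro x hx
      rw [permIso_apply]
      simp only [hFdef, Finset.coe_insert, Set.mem_insert_iff, Finset.mem_coe] at hx
      rcases hx with rfl | rfl | hx
      · exact hfa
      · exact hfb
      · exact hσ.2 x hx
    have hall := hfixF hpt
    ext x
    simpa [permIso_apply] using hall x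
  -- stabilizers
  set S : V → Finset (Equiv.Perm V) := fun ω => T.filter (fun σ => σ ω = ω) with hSdef
  have hmemS : ∀ ω σ, σ ∈ S ω ↔ (σ ∈ T ∧ σ ω = ω) := by
    intro ω σ; simp [hSdef]
  have h1S : ∀ ω, (1 : Equiv.Perm V) ∈ S ω := by
    intro ω; rw [hmemS]; exact ⟨h1T, rfl⟩
  -- nontrivial stabilizer at each point outside C
  have hS2 : ∀ ω, ω ∉ C → ∃ σ ∈ S ω, σ ≠ 1 := by
    intro ω hω
    set F : Finset V := insert ω C with hFdef
    have hFcard : F.card = k - 1 := by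
      rw [hFdef, Finset.card_insert_of_notMem hω, hC]; omega
    have hnb := hB F hFcard
    rw [IsFixingSet] at hnb
    push_neg at hnb
    obtain ⟨g, hg1, w, hw⟩ := hnb
    refine ⟨g.toEquiv, ?_, ?_⟩
    · rw [hmemS]
      constructor
      · rw [hmemT]
        refine ⟨fun a b => g.map_adj_iff, fun x hx => ?_⟩
        exact hg1 x (by simp [hFdef, hx])
      · exact hg1 ω (by simp [hFdef])
    · intro hcon
      apply hw
      have : g.toEquiv w = (1 : Equiv.Perm V) w := by rw [hcon]
      simpa using this
  -- orbits
  set O : V → Finset V := fun ω => T.image (fun σ => σ ω) with hOdef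
  have hmemO : ∀ ω x, x ∈ O ω ↔ ∃ σ ∈ T, σ ω = x := by
    intro ω x; simp [hOdef]
  have hself : ∀ ω, ω ∈ O ω := by
    intro ω; rw [hmemO]; exact ⟨1, h1T, rfl⟩
  have hOsub : ∀ ω, ω ∉ C → ∀ x ∈ O ω, x ∉ C := by
    intro ω hω x hx hxC
    rw [hmemO] at hx
    obtain ⟨σ, hσT, hσω⟩ := hx
    have hfix : σ x = x := ((hmemT σ).1 hσT).2 x hxC
    have : σ ω = σ x := by rw [hσω, hfix]
    exact hω (σ.injective this ▸ hxC)
  -- orbit-stabilizer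
  have horbstab : ∀ ω, (O ω).card * (S ω).card = T.card := by
    intro ω
    have hfib : ∀ x ∈ O ω, (T.filter (fun σ => σ ω = x)).card = (S ω).card := by
      intro x hx
      rw [hmemO] at hx
      obtain ⟨σ₀, hσ₀T, hσ₀⟩ := hx
      apply Finset.card_bij (fun σ _ => σ₀⁻¹ * σ)
      · intro σ hσ
        rw [Finset.mem_filter] at hσ
        rw [hmemS]
        refine ⟨hmulT _ (hinvT _ hσ₀T) _ hσ.1, ?_⟩
        rw [Equiv.Perm.mul_apply, hσ.2, ← hσ₀, Equiv.Perm.inv_apply_self]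
      · intro a _ b _ hab
        exact mul_left_cancel hab
      · intro τ hτ
        rw [hmemS] at hτ
        refine ⟨σ₀ * τ, ?_, ?_⟩
        · rw [Finset.mem_filter]
          exact ⟨hmulT _ hσ₀T _ hτ.1, by rw [Equiv.Perm.mul_apply, hτ.2, hσ₀]⟩
        · rw [inv_mul_cancel_left]
    have := Finset.card_eq_sum_card_fiberwise
      (f := fun σ : Equiv.Perm V => σ ω) (s := T) (t := O ω)
      (fun σ hσ => Finset.mem_coe.2 ((hmemO _ _).2 ⟨σ, hσ, rfl⟩))
    rw [this, Finset.sum_congr rfl hfib, Finset.sum_const, smul_eq_mul]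
  -- stabilizer cards constant along orbits
  have hconj : ∀ ω, ∀ x ∈ O ω, (S x).card = (S ω).card := by
    intro ω x hx
    rw [hmemO] at hx
    obtain ⟨σ₀, hσ₀T, hσ₀⟩ := hx
    symm
    apply Finset.card_bij (fun τ _ => σ₀ * τ * σ₀⁻¹)
    · intro τ hτ
      rw [hmemS] at hτ ⊢
      refine ⟨hmulT _ (hmulT _ hσ₀T _ hτ.1) _ (hinvT _ hσ₀T), ?_⟩
      rw [Equiv.Perm.mul_apply, Equiv.Perm.mul_apply, ← hσ₀, Equiv.Perm.inv_apply_self,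
        hτ.2, hσ₀]
    · intro a _ b _ hab
      exact mul_left_cancel (mul_right_cancel hab)
    · intro ρ hρ
      rw [hmemS] at hρ
      refine ⟨σ₀⁻¹ * ρ * σ₀, ?_, ?_⟩
      · rw [hmemS]
        refine ⟨hmulT _ (hmulT _ (hinvT _ hσ₀T) _ hρ.1) _ hσ₀T, ?_⟩
        rw [Equiv.Perm.mul_apply, Equiv.Perm.mul_apply, hσ₀, hρ.2, ← hσ₀,
          Equiv.Perm.inv_apply_self]
      · group
  -- disjointness of stabilizers minus identity
  have hdisj : ∀ a, a ∉ C → ∀ b, b ∉ C → a ≠ b →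
      Disjoint ((S a).erase 1) ((S b).erase 1) := by
    intro a ha b hb hab
    rw [Finset.disjoint_left]
    intro σ hσa hσb
    rw [Finset.mem_erase, hmemS] at hσa hσb
    exact hσa.1 (kill σ hσa.2.1 a b ha hb hab hσa.2.2 hσb.2.2)
  -- sum bound
  have hsum : ∀ X : Finset V, (∀ x ∈ X, x ∉ C) →
      ∑ ω ∈ X, ((S ω).erase 1).card ≤ (T.erase 1).card := by
    intro X hX
    rw [← Finset.card_biUnion (fun a ha b hb hab => hdisj a (hX a ha) b (hX b hb) hab)]
    apply Finset.card_le_card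
    intro σ hσ
    rw [Finset.mem_biUnion] at hσ
    obtain ⟨ω, _, hσω⟩ := hσ
    rw [Finset.mem_erase] at hσω ⊢
    exact ⟨hσω.1, ((hmemS ω σ).1 hσω.2).1⟩
  have hT1 : (T.erase 1).card = T.card - 1 := Finset.card_erase_of_mem h1T
  -- lower bound : |Cᶜ| ≤ |T| - 1
  have hlow : Cᶜ.card ≤ T.card - 1 := by
    rw [← hT1]
    calc Cᶜ.card = ∑ _ω ∈ Cᶜ, 1 := by rw [Finset.sum_const, smul_eq_mul, mul_one]
    _ ≤ ∑ ω ∈ Cᶜ, ((S ω).erase 1).card := by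
        apply Finset.sum_le_sum
        intro ω hω
        obtain ⟨σ, hσ, hσ1⟩ := hS2 ω (Finset.mem_compl.1 hω)
        exact Finset.card_pos.2 ⟨σ, Finset.mem_erase.2 ⟨hσ1, hσ⟩⟩
    _ ≤ (T.erase 1).card := hsum Cᶜ (fun x hx => Finset.mem_compl.1 hx)
  -- main: v must be in the orbit of u
  by_cases hvO : v ∈ O u
  · rw [hmemO] at hvO
    obtain ⟨σ, hσT, hσu⟩ := hvO
    rw [hmemT] at hσT
    exact ⟨permIso G σ hσT.1, fun x hx => hσT.2 x hx, hσu⟩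
  · exfalso
    -- orbits of u and v are disjoint
    have hOdisj : Disjoint (O u) (O v) := by
      rw [Finset.disjoint_left]
      intro x hxu hxv
      rw [hmemO] at hxu hxv
      obtain ⟨σ, hσT, hσu⟩ := hxu
      obtain ⟨τ, hτT, hτv⟩ := hxv
      apply hvO
      rw [hmemO]
      refine ⟨τ⁻¹ * σ, hmulT _ (hinvT _ hτT) _ hσT, ?_⟩
      rw [Equiv.Perm.mul_apply, hσu, ← hτv, Equiv.Perm.inv_apply_self]
    have hOuv : (O u).card + (O v).card ≤ Cᶜ.card := by
      rw [← Finset.card_union_of_disjoint hOdisj]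
      apply Finset.card_le_card
      intro x hx
      rw [Finset.mem_union] at hx
      rw [Finset.mem_compl]
      rcases hx with hx | hx
      · exact hOsub u hu x hx
      · exact hOsub v hv x hx
    -- sum over the union of the two orbits
    have horbsum : ∀ ω, ω ∉ C → ∑ x ∈ O ω, ((S x).erase 1).card
        = (O ω).card * ((S ω).card - 1) := by
      intro ω hω
      rw [Finset.sum_congr rfl (fun x hx => by
        rw [Finset.card_erase_of_mem (h1S x), hconj ω x hx]), Finset.sum_const, smul_eq_mul]
    have hXsum : ∑ x ∈ O u ∪ O v, ((S x).erase 1).card ≤ T.card - 1 := by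
      rw [← hT1]
      apply hsum
      intro x hx
      rw [Finset.mem_union] at hx
      rcases hx with hx | hx
      · exact hOsub u hu x hx
      · exact hOsub v hv x hx
    rw [Finset.sum_union hOdisj, horbsum u hu, horbsum v hv] at hXsum
    -- now pure arithmetic
    set a := (S u).card with ha
    set b := (O u).card with hb
    set a' := (S v).card with ha'
    set b' := (O v).card with hb'
    set t := T.card with ht
    have hba : b * a = t := horbstab u
    have hba' : b' * a' = t := horbstab v
    have ha2 : 2 ≤ a := by
      obtain ⟨σ, hσ, hσ1⟩ := hS2 u hu
      exact Finset.one_lt_card.2 ⟨σ, hσ, 1, h1S u, hσ1⟩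
    have ha2' : 2 ≤ a' := by
      obtain ⟨σ, hσ, hσ1⟩ := hS2 v hv
      exact Finset.one_lt_card.2 ⟨σ, hσ, 1, h1S v, hσ1⟩
    have hb1 : 1 ≤ b := Finset.card_pos.2 ⟨u, hself u⟩
    have hb1' : 1 ≤ b' := Finset.card_pos.2 ⟨v, hself v⟩
    have he1 : b * (a - 1) + b = t := by
      have : b * (a - 1) + b * 1 = b * ((a - 1) + 1) := (Nat.mul_add b _ _).symm
      rw [Nat.sub_add_cancel (by omega : 1 ≤ a)] at this
      simpa [hba] using this
    have he2 : b' * (a' - 1) + b' = t := by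
      have : b' * (a' - 1) + b' * 1 = b' * ((a' - 1) + 1) := (Nat.mul_add b' _ _).symm
      rw [Nat.sub_add_cancel (by omega : 1 ≤ a')] at this
      simpa [hba'] using this
    have h2b : 2 * b ≤ t := by calc 2 * b = b * 2 := Nat.mul_comm _ _
                                  _ ≤ b * a := Nat.mul_le_mul_left b ha2
                                  _ = t := hba
    have h2b' : 2 * b' ≤ t := by calc 2 * b' = b' * 2 := Nat.mul_comm _ _
                                   _ ≤ b' * a' := Nat.mul_le_mul_left b' ha2'
                                   _ = t := hba'
    have hcc : b + b' ≤ t - 1 := le_trans hOuv hlow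
    omega

/-- Two-point transitivity. -/
private lemma aux_two_trans [Fintype V] [DecidableEq V] (G : SimpleGraph V) (k : ℕ)
    (hk : 4 ≤ k) (hn : k + 2 ≤ Fintype.card V)
    (hA : ∀ F : Finset V, F.card = k → IsFixingSet G ↑F)
    (hB : ∀ F : Finset V, F.card = k - 1 → ¬ IsFixingSet G ↑F)
    (a b c d : V) (hab : a ≠ b) (hcd : c ≠ d) :
    ∃ g : G ≃g G, g a = c ∧ g b = d := by
  classical
  -- step 1 : map a to c fixing some (k-2)-set avoiding a, c
  obtain ⟨C₁, hC₁sub, hC₁card⟩ := Finset.exists_subset_card_eq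
    (show k - 2 ≤ ({a, c}ᶜ : Finset V).card by
      rw [Finset.card_compl]
      have : ({a, c} : Finset V).card ≤ 2 := Finset.card_insert_le _ _ |>.trans (by simp)
      omega)
  have haC₁ : a ∉ C₁ := fun h => by simpa using Finset.mem_compl.1 (hC₁sub h)
  have hcC₁ : c ∉ C₁ := fun h => by
    have := Finset.mem_compl.1 (hC₁sub h)
    simp at this
  obtain ⟨g₁, _, hg₁a⟩ := aux_trans G k hk hn hA hB C₁ hC₁card a c haC₁ hcC₁
  set b₁ := g₁ b with hb₁
  have hb₁c : b₁ ≠ c := by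
    intro h
    exact hab (g₁.injective (by rw [hg₁a, ← h, hb₁]))
  -- step 2 : map b₁ to d fixing a (k-2)-set containing c, avoiding b₁, d
  obtain ⟨D, hDsub, hDcard⟩ := Finset.exists_subset_card_eq
    (show k - 3 ≤ ({c, b₁, d}ᶜ : Finset V).card by
      rw [Finset.card_compl]
      have : ({c, b₁, d} : Finset V).card ≤ 3 := by
        apply le_trans (Finset.card_insert_le _ _)
        have : ({b₁, d} : Finset V).card ≤ 2 := Finset.card_insert_le _ _ |>.trans (by simp)
        omega
      omega)
  have hcD : c ∉ D := fun h => by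
    have := Finset.mem_compl.1 (hDsub h); simp at this
  have hb₁D : b₁ ∉ D := fun h => by
    have := Finset.mem_compl.1 (hDsub h); simp at this
  have hdD : d ∉ D := fun h => by
    have := Finset.mem_compl.1 (hDsub h); simp at this
  set C₂ : Finset V := insert c D with hC₂def
  have hC₂card : C₂.card = k - 2 := by
    rw [hC₂def, Finset.card_insert_of_notMem hcD, hDcard]; omega
  have hb₁C₂ : b₁ ∉ C₂ := by
    rw [hC₂def, Finset.mem_insert]; push_neg; exact ⟨hb₁c, hb₁D⟩
  have hdC₂ : d ∉ C₂ := by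
    rw [hC₂def, Finset.mem_insert]; push_neg; exact ⟨hcd.symm, hdD⟩
  obtain ⟨g₂, hg₂C, hg₂b⟩ := aux_trans G k hk hn hA hB C₂ hC₂card b₁ d hb₁C₂ hdC₂
  refine ⟨g₁.trans g₂, ?_, ?_⟩
  · show g₂ (g₁ a) = c
    rw [hg₁a]
    exact hg₂C c (by simp [hC₂def])
  · show g₂ (g₁ b) = d
    rw [← hb₁, hg₂b]

theorem stmt14 [Fintype V] (G : SimpleGraph V) (k r : ℕ)
    (hfix : fixNum G = k) (hfxd : fxdNum G = k)
    (hr : Set.ncard {v : V | ∃ u, u ≠ v ∧ ∃ g : G ≃g G, g v = u} = r) :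
    k ≤ 3 ∨ r - 1 ≤ k := by
  classical
  by_contra hcon
  push_neg at hcon
  obtain ⟨hk3, hkr⟩ := hcon
  have hk : 4 ≤ k := hk3
  have hrk : k + 2 ≤ r := by omega
  have hrn : r ≤ Fintype.card V := by
    rw [← hr]
    calc Set.ncard {v : V | ∃ u, u ≠ v ∧ ∃ g : G ≃g G, g v = u}
        ≤ Set.ncard (Set.univ : Set V) := Set.ncard_le_ncard (Set.subset_univ _) Set.finite_univ
      _ = Fintype.card V := by rw [Set.ncard_univ, Nat.card_eq_fintype_card]
  have hn : k + 2 ≤ Fintype.card V := le_trans hrk hrn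
  -- every k-set is fixing
  have hA : ∀ F : Finset V, F.card = k → IsFixingSet G ↑F := by
    have hne : {m | ∀ F : Finset V, F.card = m → IsFixingSet G ↑F}.Nonempty := by
      refine ⟨Fintype.card V + 1, fun F hF => absurd hF ?_⟩
      have := F.card_le_univ
      omega
    have h := Nat.sInf_mem hne
    have h2 : fxdNum G ∈ {m | ∀ F : Finset V, F.card = m → IsFixingSet G ↑F} := h
    rw [hfxd] at h2
    exact h2
  -- no (k-1)-set is fixing
  have hB : ∀ F : Finset V, F.card = k - 1 → ¬ IsFixingSet G ↑F := by
    intro F hF hfixF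
    have : fixNum G ≤ k - 1 := Nat.sInf_le ⟨F, hF, hfixF⟩
    omega
  -- pair homogeneity
  have hom : ∀ a b c d : V, a ≠ b → c ≠ d → (G.Adj a b ↔ G.Adj c d) := by
    intro a b c d hab hcd
    obtain ⟨g, h1, h2⟩ := aux_two_trans G k hk hn hA hB a b c d hab hcd
    rw [← h1, ← h2, g.map_adj_iff]
  -- find a k-set and two points outside it
  obtain ⟨F, _, hFcard⟩ := Finset.exists_subset_card_eq
    (show k ≤ (Finset.univ : Finset V).card by rw [Finset.card_univ]; omega)
  have hcompl : 1 < Fᶜ.card := by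
    rw [Finset.card_compl, hFcard]; omega
  obtain ⟨p, hp, q, hq, hpq⟩ := Finset.one_lt_card.1 hcompl
  -- the swap of p and q is an automorphism
  have hswap : IsGAut G (Equiv.swap p q) := by
    intro x y
    by_cases hxy : x = y
    · subst hxy
      simp
    · exact hom _ _ _ _ (fun h => hxy ((Equiv.swap p q).injective h)) hxy
  have hfixF := hA F hFcard (permIso G (Equiv.swap p q) hswap)
  have hpt : ∀ x ∈ (F : Set V), permIso G (Equiv.swap p q) hswap x = x := by
    intro x hx
    rw [permIso_apply]
    apply Equiv.swap_apply_of_ne_of_ne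
    · intro h; subst h; exact (Finset.mem_compl.1 hp) hx
    · intro h; subst h; exact (Finset.mem_compl.1 hq) hx
  have := hfixF hpt p
  rw [permIso_apply, Equiv.swap_apply_left] at this
  exact hpq this.symm
end

section
/- Let G be a distance-transitive k-fixed graph of order n. Then for each vertex v, the degree of v in the fixing graph D(G) equals C(n,2) − Σ_{i=1}^{e(v)} C(|Ψ_i(v)|, 2), where Ψ_i(v) = {x : d(v,x) = i} and e(v) is the eccentricity of v. -/
open SimpleGraph

variable {V : Type*}

private lemma iso_dist_le {G : SimpleGraph V} (hconn : G.Connected) (g : G ≃g G) (a b : V) :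
    G.dist (g a) (g b) ≤ G.dist a b := by
  obtain ⟨p, hp⟩ := (hconn a b).exists_walk_length_eq_dist
  calc G.dist (g a) (g b) ≤ (p.map g.toHom).length := SimpleGraph.dist_le _
    _ = G.dist a b := by rw [SimpleGraph.Walk.length_map, hp]

private lemma iso_dist {G : SimpleGraph V} (hconn : G.Connected) (g : G ≃g G) (a b : V) :
    G.dist (g a) (g b) = G.dist a b := by
  refine le_antisymm (iso_dist_le hconn g a b) ?_
  have := iso_dist_le hconn g.symm (g a) (g b)
  simpa using this

theorem stmt18 [Fintype V] (G : SimpleGraph V) (hconn : G.Connected)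
    (hdt : ∀ u v x y : V, G.dist u v = G.dist x y →
      ∃ g : G ≃g G, g u = x ∧ g v = y)
    (k : ℕ) (hfix : fixNum G = k) (hfxd : fxdNum G = k) (v : V) :
    Set.ncard {p : Sym2 V | ¬ p.IsDiag ∧
        ∀ x y : V, p = s(x, y) → ¬ ∃ g : G ≃g G, g v = v ∧ g x = y} =
      (Fintype.card V).choose 2 -
        ∑ i ∈ Finset.Icc 1 (Finset.univ.sup fun y => G.dist v y),
          (Set.ncard {x : V | G.dist v x = i}).choose 2 := by
  classical
  -- key equivalence: for x y, ∃ g fixing v with g x = y  ↔  equal distance from v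
  have key : ∀ x y : V, (∃ g : G ≃g G, g v = v ∧ g x = y) ↔ G.dist v x = G.dist v y := by
    intro x y
    constructor
    · rintro ⟨g, hgv, hgx⟩
      have h := iso_dist hconn g v x
      rw [hgv, hgx] at h
      exact h.symm
    · intro h
      obtain ⟨g, hg1, hg2⟩ := hdt v x v y h
      exact ⟨g, hg1, hg2⟩
  set ecc := Finset.univ.sup fun y => G.dist v y with hecc
  set Φ : ℕ → Finset V := fun i => Finset.univ.filter (fun x => G.dist v x = i) with hΦ
  set A : Finset (Sym2 V) := (Finset.univ : Finset V).offDiag.image Sym2.mk.uncurry with hA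
  set B : ℕ → Finset (Sym2 V) := fun i => (Φ i).offDiag.image Sym2.mk.uncurry with hB
  set Bu : Finset (Sym2 V) := (Finset.Icc 1 ecc).biUnion B with hBu
  have hmemA : ∀ p : Sym2 V, p ∈ A ↔ ¬ p.IsDiag := by
    intro p
    induction p using Sym2.ind with
    | _ x y =>
      simp only [hA, Finset.mem_image, Finset.mem_offDiag, Finset.mem_univ, true_and,
        Sym2.isDiag_iff_proj_eq, Prod.exists, Function.uncurry_apply_pair, Sym2.eq_iff]
      constructor
      · rintro ⟨a, b, hab, hp⟩
        rcases hp with ⟨rfl, rfl⟩ | ⟨rfl, rfl⟩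
        · exact hab
        · exact fun h => hab h.symm
      · intro h; exact ⟨x, y, h, Or.inl ⟨rfl, rfl⟩⟩
  have hmemB : ∀ i (p : Sym2 V), p ∈ B i ↔
      ¬ p.IsDiag ∧ ∀ a ∈ p, G.dist v a = i := by
    intro i p
    induction p using Sym2.ind with
    | _ x y =>
      simp only [hB, Finset.mem_image, Finset.mem_offDiag, hΦ, Finset.mem_filter,
        Finset.mem_univ, true_and, Sym2.isDiag_iff_proj_eq, Sym2.mem_iff]
      constructor
      · rintro ⟨⟨a, b⟩, ⟨ha, hb, hab⟩, hp⟩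
        rw [Function.uncurry_apply_pair, Sym2.eq_iff] at hp
        rcases hp with ⟨rfl, rfl⟩ | ⟨rfl, rfl⟩
        · exact ⟨hab, by rintro z (rfl | rfl) <;> assumption⟩
        · exact ⟨fun h => hab h.symm, by rintro z (rfl | rfl) <;> assumption⟩
      · rintro ⟨hxy, h⟩
        exact ⟨(x, y), ⟨h x (Or.inl rfl), h y (Or.inr rfl), hxy⟩, rfl⟩
  -- the set in question equals A \ Bu
  have hset : {p : Sym2 V | ¬ p.IsDiag ∧
      ∀ x y : V, p = s(x, y) → ¬ ∃ g : G ≃g G, g v = v ∧ g x = y} = ↑(A \ Bu) := by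
    ext p
    induction p using Sym2.ind with
    | _ x y =>
      simp only [Set.mem_setOf_eq, Finset.coe_sdiff, Set.mem_diff, Finset.mem_coe,
        hmemA, hBu, Finset.mem_biUnion, Finset.mem_Icc, hmemB]
      constructor
      · rintro ⟨hd, h⟩
        refine ⟨hd, ?_⟩
        rintro ⟨i, ⟨hi1, hi2⟩, hdg, hall⟩
        have hx := hall x (Sym2.mem_mk_left x y)
        have hy := hall y (Sym2.mem_mk_right x y)
        exact h x y rfl ((key x y).mpr (hx.trans hy.symm))
      · rintro ⟨hd, h⟩
        refine ⟨hd, ?_⟩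
        rintro a b hab hg
        rw [Sym2.eq_iff] at hab
        have hdist : G.dist v a = G.dist v b := (key a b).mp hg
        have hxy : G.dist v x = G.dist v y := by
          rcases hab with ⟨rfl, rfl⟩ | ⟨rfl, rfl⟩
          · exact hdist
          · exact hdist.symm
        have hne : x ≠ y := by
          rw [Sym2.isDiag_iff_proj_eq] at hd; exact hd
        -- the common distance i is in Icc 1 ecc
        have hpos : 1 ≤ G.dist v x := by
          rcases Nat.eq_zero_or_pos (G.dist v x) with h0 | h1
          · exfalso
            have hxv : v = x := hconn.dist_eq_zero_iff.mp h0
            have hyv : v = y := hconn.dist_eq_zero_iff.mp (hxy ▸ h0)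
            exact hne (hxv ▸ hyv)
          · exact h1
        have hle : G.dist v x ≤ ecc := Finset.le_sup (Finset.mem_univ x)
        exact h ⟨G.dist v x, ⟨hpos, hle⟩, by
          rw [Sym2.isDiag_iff_proj_eq]; exact hne, by
          rintro z hz
          rcases Sym2.mem_iff.mp hz with rfl | rfl
          · rfl
          · exact hxy.symm⟩
  rw [hset, Set.ncard_coe_finset]
  have hBuA : Bu ⊆ A := by
    intro p hp
    rw [hBu, Finset.mem_biUnion] at hp
    obtain ⟨i, _, hpB⟩ := hp
    exact (hmemA p).mpr ((hmemB i p).mp hpB).1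
  rw [Finset.card_sdiff_of_subset hBuA]
  have hAcard : A.card = (Fintype.card V).choose 2 := by
    rw [hA, Sym2.card_image_offDiag, Finset.card_univ]
  have hBucard : Bu.card = ∑ i ∈ Finset.Icc 1 ecc,
      (Set.ncard {x : V | G.dist v x = i}).choose 2 := by
    rw [hBu, Finset.card_biUnion]
    · apply Finset.sum_congr rfl
      intro i _
      rw [hB]
      rw [Sym2.card_image_offDiag]
      congr 1
      have : {x : V | G.dist v x = i} = ↑(Φ i) := by
        ext x; simp [hΦ]
      rw [this, Set.ncard_coe_finset]
    · intro i _ j _ hij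
      rw [Function.onFun, Finset.disjoint_left]
      intro p hpi hpj
      obtain ⟨hd, hi⟩ := (hmemB i p).mp hpi
      obtain ⟨_, hj⟩ := (hmemB j p).mp hpj
      induction p using Sym2.ind with
      | _ a b =>
        have ha := Sym2.mem_mk_left a b
        exact hij ((hi a ha).symm.trans (hj a ha))
  rw [hAcard, hBucard]
end
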